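/- arXiv:1801.07802 — 2 statements merged into one kernel-verified Lean document; each statement's English description precedes it below -/
import Mathlib

section
/- There is no number field K such that the image σ(O_K^*) of its unit group under some complex embedding σ is contained in the unit circle {z ∈ ℂ : |z| = 1} and rank O_K^* ≥ 1. -/
open NumberField NumberField.InfinitePlace NumberField.Units
open NumberField.Units.dirichletUnitTheorem

/-- There is no number field of unit rank at least one admitting a complex embedding under which
every unit has modulus `1`. -/
theorem stmt_13 (K : Type*) [Field K] [NumberField K]
    (hrank : 1 ≤ NumberField.Units.rank K) (σ : K →+* ℂ)
    (h : ∀ u : (𝓞 K)ˣ, ‖σ (algebraMap (𝓞 K) K (u : 𝓞 K))‖ = 1) :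
    False := by
  classical
  set w : InfinitePlace K := InfinitePlace.mk σ with hwdef
  have hw : ∀ u : (𝓞 K)ˣ, w (algebraMap (𝓞 K) K (u : 𝓞 K)) = 1 := fun u => by
    rw [hwdef, InfinitePlace.apply]; exact h u
  have hcard : 2 ≤ Fintype.card (InfinitePlace K) := by
    have h1 : 1 ≤ Fintype.card (InfinitePlace K) := Fintype.card_pos
    have h2 : NumberField.Units.rank K = Fintype.card (InfinitePlace K) - 1 := rfl
    omega
  obtain ⟨w', hw'⟩ := Fintype.exists_ne_of_one_lt_card (by omega) (w₀ : InfinitePlace K)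
  haveI : Nonempty {v : InfinitePlace K // v ≠ w₀} := ⟨⟨w', hw'⟩⟩
  -- choose a nonzero linear functional vanishing on the unit lattice
  obtain ⟨f, hfker, hfne⟩ :
      ∃ f : ({v : InfinitePlace K // v ≠ (w₀ : InfinitePlace K)} → ℝ) →ₗ[ℝ] ℝ,
        (∀ u : (𝓞 K)ˣ, f (logEmbedding K (Additive.ofMul u)) = 0) ∧ f ≠ 0 := by
    by_cases hcase : w = w₀
    · refine ⟨∑ i, LinearMap.proj i, fun u => ?_, ?_⟩
      · have hsum := sum_logEmbedding_component (K := K) u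
        rw [hcase] at hw
        simp only [hw u, Real.log_one, mul_zero, neg_mul, neg_zero] at hsum
        simpa using hsum
      · intro hf0
        have := congrFun (congrArg (fun g : _ →ₗ[ℝ] ℝ => g.toFun)
          hf0) (fun _ => (1 : ℝ))
        simp [LinearMap.sum_apply, LinearMap.proj_apply, Finset.sum_const] at this
        have : (0 : ℕ) < Fintype.card {v : InfinitePlace K // v ≠ w₀} :=
          Fintype.card_pos
        simp_all
    · refine ⟨LinearMap.proj ⟨w, hcase⟩, fun u => ?_, ?_⟩
      · have := logEmbedding_component (K := K) u ⟨w, hcase⟩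
        simp [LinearMap.proj_apply, this, hw u]
      · intro hf0
        have := congrFun (congrArg (fun g : _ →ₗ[ℝ] ℝ => g.toFun) hf0)
          (fun _ => (1 : ℝ))
        simpa [LinearMap.proj_apply] using this
  -- f vanishes on the unit lattice, hence on its real span, which is everything
  have hle : Submodule.span ℝ (unitLattice K :
      Set ({v : InfinitePlace K // v ≠ w₀} → ℝ)) ≤ LinearMap.ker f := by
    rw [Submodule.span_le]
    rintro x ⟨u, -, rfl⟩
    exact hfker u
  rw [unitLattice_span_eq_top] at hle
  exact hfne (LinearMap.ext fun x => hle (Submodule.mem_top : x ∈ ⊤))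
end

section
/- Let J ⊆ I be a finite-index inclusion of discrete abelian groups and r : Î → Ĵ the restriction map of Pontryagin duals. For each γ ∈ Ĵ there exists an open neighborhood N of γ and continuous maps h_1, ..., h_n : N → Î (where n = [I : J]) with mutually disjoint images such that r ∘ h_j = id_N for each j and r⁻¹(E) is the disjoint union of h_1(E), ..., h_n(E) for every E ⊆ N; moreover the Haar measure of h_j(E) is independent of j for every measurable E ⊆ N. -/
/-!
The kernel of the restriction `r : Î → Ĵ` is the group of characters of `I / J`, which has
`[I : J]` elements, and `r` is onto because the divisible group `𝕋` is an injective `ℤ`-module, so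
characters of `J` extend to `I`. As `Î` is compact, the open mapping theorem makes `r` open. Since
`ker r` is finite, hence `ker r \ {1}` is closed, there is an open `U ∋ α` over `γ = r α` with
`U / U` disjoint from `ker r \ {1}`; so `r` maps `U` homeomorphically onto the open set `N = r U`,
and the translates of its inverse by the elements of `ker r` are the required sections. Their
images of `E ⊆ N` are translates of one another, hence have equal Haar measure.
-/

open MeasureTheory

/-- The inclusion of a subgroup `J` of a discrete abelian group `I`, as a continuous
monoid homomorphism. -/
def subgroupInclusion {I : Type*} [CommGroup I] [TopologicalSpace I] (J : Subgroup I) :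
    ContinuousMonoidHom J I :=
  ⟨J.subtype, continuous_subtype_val⟩

noncomputable instance : DivisibleBy (Additive Circle) ℤ :=
  divisibleByOfSMulRightSurj _ _ fun {n} hn =>
    have : NeZero n := ⟨hn⟩
    (Circle.isQuotientCoveringMap_zpow n).surjective

theorem MonoidHom.exists_circle_comp_eq_of_injective {A B : Type*} [CommGroup A] [CommGroup B]
    (f : A →* B) (hf : Function.Injective f) (χ : A →* Circle) :
    ∃ χ' : B →* Circle, χ'.comp f = χ := by
  obtain ⟨χ', hχ'⟩ := (Module.Baer.of_divisible (Additive Circle)).extension_property_addMonoidHom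
    f.toAdditive hf χ.toAdditive
  exact ⟨MonoidHom.toAdditive.symm χ', MonoidHom.toAdditive.injective hχ'⟩

theorem CommGroup.card_monoidHom_circle (G : Type*) [CommGroup G] [Finite G] :
    Nat.card (G →* Circle) = Nat.card G := by
  have : NeZero (Monoid.exponent G) := ⟨Monoid.exponent_ne_zero_of_finite⟩
  rw [Nat.card_congr (MulEquiv.monoidHomCongrRight (toUnits (G := Circle))).toEquiv,
    CommGroup.card_monoidHom_of_hasEnoughRootsOfUnity]

def ContinuousMonoidHom.equivMonoidHomOfDiscrete (A B : Type*) [Monoid A] [Monoid B]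
    [TopologicalSpace A] [DiscreteTopology A] [TopologicalSpace B] : (A →ₜ* B) ≃ (A →* B) where
  toFun f := f.toMonoidHom
  invFun f := ⟨f, continuous_of_discreteTopology⟩

namespace PontryaginDual

variable {A B : Type*} [CommGroup A] [CommGroup B] [TopologicalSpace A] [TopologicalSpace B]

theorem map_surjective_of_injective [DiscreteTopology B] (f : A →ₜ* B)
    (hf : Function.Injective f) : Function.Surjective (map f) := fun χ => by
  obtain ⟨χ', hχ'⟩ := (f : A →* B).exists_circle_comp_eq_of_injective hf χ
  exact ⟨⟨χ', continuous_of_discreteTopology⟩,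
    ContinuousMonoidHom.ext fun a => DFunLike.congr_fun hχ' a⟩

theorem card_ker_map_subgroupInclusion [DiscreteTopology A] (J : Subgroup A) [J.FiniteIndex] :
    Nat.card (map (subgroupInclusion J)).toMonoidHom.ker = J.index := by
  calc _ = Nat.card (MonoidHom.domRestrictHom J Circle).ker :=
        Nat.card_congr <| (ContinuousMonoidHom.equivMonoidHomOfDiscrete A Circle).subtypeEquiv
          fun χ => by
            simp only [MonoidHom.mem_ker]
            exact ⟨fun h => MonoidHom.ext fun a => DFunLike.congr_fun h a,
              fun h => ContinuousMonoidHom.ext fun a => DFunLike.congr_fun h a⟩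
    _ = Nat.card (A ⧸ J →* Circle) :=
        Nat.card_congr (MonoidHom.domRestrictHomKerEquiv Circle J).toEquiv
    _ = J.index := by rw [CommGroup.card_monoidHom_circle, Subgroup.index_eq_card]

end PontryaginDual

namespace MonoidHom

variable {G H : Type*} [Group G] [Group H]

theorem exists_isOpen_injOn_of_finite_ker [TopologicalSpace G] [ContinuousDiv G] [T1Space G]
    (f : G →* H) (hK : (f.ker : Set G).Finite) (g : G) :
    ∃ U : Set G, IsOpen U ∧ g ∈ U ∧ Set.InjOn f U := by
  have hO : IsOpen {p : G × G | p.1 / p.2 ∉ (f.ker : Set G) \ {1}} :=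
    (hK.sdiff.isClosed.isOpen_compl).preimage continuous_div'
  obtain ⟨u, v, hu, hv, hgu, hgv, huv⟩ := isOpen_prod_iff.mp hO g g (by simp)
  refine ⟨u ∩ v, hu.inter hv, ⟨hgu, hgv⟩, fun a ha b hb hab => ?_⟩
  have hab_ker : a / b ∈ f.ker := by rw [mem_ker, map_div, hab, div_self']
  have : a / b ∉ (f.ker : Set G) \ {1} := huv (Set.mk_mem_prod ha.1 hb.2)
  exact div_eq_one.mp (by simpa [hab_ker] using this)

theorem exists_continuous_local_section [TopologicalSpace G] [ContinuousDiv G]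
    [T1Space G] [TopologicalSpace H] (f : G →* H) (hf : Continuous f) (hf_open : IsOpenMap f)
    (hf_surj : Function.Surjective f) (hK : (f.ker : Set G).Finite) (y : H) :
    ∃ N : Set H, IsOpen N ∧ y ∈ N ∧ ∃ s : N → G, Continuous s ∧ ∀ x, f (s x) = x := by
  obtain ⟨g, rfl⟩ := hf_surj y
  obtain ⟨U, hU, hgU, hinj⟩ := f.exists_isOpen_injOn_of_finite_ker hK g
  let e := OpenPartialHomeomorph.ofContinuousOpen (hinj.toPartialEquiv f U) hf.continuousOn
    hf_open hU
  exact ⟨e.target, e.open_target, ⟨g, hgU, rfl⟩, e.target.domRestrict e.symm,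
    e.continuousOn_symm.domRestrict, fun x => e.right_inv x.2⟩

variable (f : G →* H) {N : Set H} {s : N → G} (hs : ∀ x, f (s x) = x)
include hs

theorem map_mul_section (k : f.ker) (x : N) : f (k * s x) = x := by
  rw [map_mul, k.2, one_mul, hs]

theorem mul_section_inj {k k' : f.ker} {x x' : N} :
    (k : G) * s x = k' * s x' ↔ k = k' ∧ x = x' := by
  refine ⟨fun h => ?_, fun ⟨hk, hx⟩ => hk ▸ hx ▸ rfl⟩
  have hx : x = x' := Subtype.ext <| by
    simpa only [map_mul_section f hs] using congrArg f h
  subst hx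
  exact ⟨Subtype.ext (mul_right_cancel h), rfl⟩

theorem preimage_image_val_eq_iUnion_mul_section (E : Set N) :
    f ⁻¹' (Subtype.val '' E) = ⋃ k : f.ker, (fun x => (k : G) * s x) '' E := by
  ext z
  simp only [Set.mem_preimage, Set.mem_iUnion, Set.mem_image]
  constructor
  · rintro ⟨x, hxE, hxz⟩
    have hk : z / s x ∈ f.ker := by rw [mem_ker, map_div, hs, hxz, div_self']
    exact ⟨⟨z / s x, hk⟩, x, hxE, div_mul_cancel z (s x)⟩
  · rintro ⟨k, x, hxE, rfl⟩
    exact ⟨x, hxE, (map_mul_section f hs k x).symm⟩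

end MonoidHom

theorem measure_image_mul_left {G α : Type*} [Group G] [MeasurableSpace G] [MeasurableMul G]
    (μ : Measure G) [μ.IsMulLeftInvariant] (g : G) (s : α → G) (E : Set α) :
    μ ((fun x => g * s x) '' E) = μ (s '' E) := by
  rw [← Set.image_image (g * ·), Set.image_mul_left, measure_preimage_mul]

theorem stmt_15_general {I : Type*} [CommGroup I] [TopologicalSpace I] [DiscreteTopology I]
    (J : Subgroup I) [J.FiniteIndex]
    [MeasurableSpace (PontryaginDual I)] [BorelSpace (PontryaginDual I)]
    (μ : Measure (PontryaginDual I)) [μ.IsHaarMeasure] (γ : PontryaginDual J) :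
    ∃ N : Set (PontryaginDual J), IsOpen N ∧ γ ∈ N ∧
      ∃ h : Fin J.index → (N → PontryaginDual I),
        (∀ j, Continuous (h j)) ∧
        (∀ j k, j ≠ k → ∀ x y : N, h j x ≠ h k y) ∧
        (∀ (j) (x : N), PontryaginDual.map (subgroupInclusion J) (h j x) = (x : PontryaginDual J)) ∧
        (∀ E : Set N,
          (PontryaginDual.map (subgroupInclusion J)) ⁻¹' (Subtype.val '' E) = ⋃ j, h j '' E) ∧
        (∀ E : Set N, ∀ j k, μ (h j '' E) = μ (h k '' E)) := by
  let ρ := PontryaginDual.map (subgroupInclusion J)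
  let r := ρ.toMonoidHom
  have hr_surj : Function.Surjective r :=
    PontryaginDual.map_surjective_of_injective _ Subtype.val_injective
  have hr_open : IsOpenMap r := r.isOpenMap_of_sigmaCompact hr_surj ρ.continuous_toFun
  have hK := PontryaginDual.card_ker_map_subgroupInclusion J
  have : Finite r.ker := Nat.finite_of_card_ne_zero (hK ▸ J.index_ne_zero_of_finite)
  obtain ⟨N, hN, hγN, s, hs_cont, hs⟩ :=
    r.exists_continuous_local_section ρ.continuous_toFun hr_open hr_surj (Set.toFinite _) γ
  let e : Fin J.index ≃ r.ker := (Finite.equivFinOfCardEq hK).symm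
  refine ⟨N, hN, hγN, fun j x => (e j : PontryaginDual I) * s x,
    fun j => continuous_const.mul hs_cont, ?_, fun j => r.map_mul_section hs (e j),
    fun E => ?_, fun E j k => ?_⟩
  · exact fun j k hjk x y hxy => hjk (e.injective ((r.mul_section_inj hs).1 hxy).1)
  · exact (r.preimage_image_val_eq_iUnion_mul_section hs E).trans
      (e.surjective.iUnion_comp fun k => (fun x => (k : PontryaginDual I) * s x) '' E).symm
  · rw [measure_image_mul_left, measure_image_mul_left]

/-- Local sections of the restriction map `r : Î → Ĵ` of Pontryagin duals of a finite-index
inclusion `J ≤ I` of discrete abelian groups: each `γ ∈ Ĵ` has an open neighborhood `N`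
admitting `n = [I : J]` continuous local inverses of `r` with mutually disjoint images that
exhaust `r⁻¹(E)` for every `E ⊆ N`, and the images of any `E ⊆ N` under any two of these
sections have the same Haar measure. -/
theorem stmt_15 {I : Type*} [CommGroup I] [TopologicalSpace I] [DiscreteTopology I]
    [IsTopologicalGroup I] (J : Subgroup I) [J.FiniteIndex]
    [MeasurableSpace (PontryaginDual I)] [BorelSpace (PontryaginDual I)]
    (μ : Measure (PontryaginDual I)) [μ.IsHaarMeasure] (γ : PontryaginDual J) :
    ∃ N : Set (PontryaginDual J), IsOpen N ∧ γ ∈ N ∧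
      ∃ h : Fin J.index → (N → PontryaginDual I),
        (∀ j, Continuous (h j)) ∧
        (∀ j k, j ≠ k → ∀ x y : N, h j x ≠ h k y) ∧
        (∀ (j) (x : N), PontryaginDual.map (subgroupInclusion J) (h j x) = (x : PontryaginDual J)) ∧
        (∀ E : Set N,
          (PontryaginDual.map (subgroupInclusion J)) ⁻¹' (Subtype.val '' E) = ⋃ j, h j '' E) ∧
        (∀ E : Set N, ∀ j k, μ (h j '' E) = μ (h k '' E)) :=
  stmt_15_general J μ γ
end
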